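/- arXiv:2303.03255 — 2 statements merged into one kernel-verified Lean document; each statement's English description precedes it below -/
import Mathlib

section
/- The integral over all triples (v₁, v₂, v₃) ∈ S² × S² × S² of the absolute value of the determinant |det(v₁, v₂, v₃)| with respect to the product of surface measures equals 8π⁴. -/
open MeasureTheory Metric Matrix

/-- The surface measure on the unit sphere `S² ⊂ ℝ³` (total mass `4π`). -/
noncomputable def sphereMeasure :
    Measure (sphere (0 : EuclideanSpace ℝ (Fin 3)) 1) :=
  (volume : Measure (EuclideanSpace ℝ (Fin 3))).toSphere

/-- The determinant of the 3×3 matrix with columns `a`, `b`, `c`. -/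
noncomputable def det3 (a b c : EuclideanSpace ℝ (Fin 3)) : ℝ :=
  Matrix.det (Matrix.of ![(a : Fin 3 → ℝ), b, c])ᵀ

/-!
Since `det (v₁, v₂, v₃) = ⟪v₁ × v₂, v₃⟫`, the innermost integral is `∫_{S²} |⟪w, v⟫| dv = 2π ‖w‖`
with `w = v₁ × v₂`, the middle one is `∫_{S²} ‖v₁ × v‖ dv = π²`, and `σ(S²) = 4π`; hence the value
`4π · 2π · π² = 8π⁴`.

Both sphere integrals are of positively 1-homogeneous functions `f`, and for those polar
coordinates give `∫_{ℝ³} f(x) e^{-‖x‖²} dx = (∫_{S²} f) · ∫_0^∞ r³ e^{-r²} dr = ½ ∫_{S²} f`.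
After a rotation taking `w` to `‖w‖ e₀`, the Gaussian integral factors into a one-dimensional
integral in `x₀` and a radial integral in the `(x₁, x₂)`-plane.
-/

open Real Set
open scoped InnerProductSpace

theorem integral_Ioi_pow_mul_exp_neg_sq (k : ℕ) :
    ∫ r in Ioi (0 : ℝ), r ^ k * exp (-r ^ 2) = Gamma ((k + 1) / 2) / 2 := by
  have h := integral_rpow_mul_exp_neg_rpow (p := 2) two_pos (q := k)
    (by linarith [k.cast_nonneg (α := ℝ)])
  simp only [rpow_natCast, rpow_two] at h
  rw [h, one_div_mul_eq_div]

theorem integral_abs_mul_exp_neg_sq : ∫ t : ℝ, |t| * exp (-t ^ 2) = 1 := by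
  have h := integral_comp_abs (f := fun t : ℝ => t * exp (-t ^ 2))
  simp only [sq_abs] at h
  have h1 := integral_Ioi_pow_mul_exp_neg_sq 1
  simp only [pow_one] at h1
  rw [h, h1]
  norm_num

theorem integral_mul_fun_norm_of_homogeneous {E : Type*} [NormedAddCommGroup E]
    [NormedSpace ℝ E] [FiniteDimensional ℝ E] [Nontrivial E] [MeasurableSpace E] [BorelSpace E]
    (μ : Measure E) [μ.IsAddHaarMeasure] {n : ℕ} {f : E → ℝ}
    (hf : ∀ r : ℝ, 0 < r → ∀ x, f (r • x) = r ^ n * f x) (g : ℝ → ℝ) :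
    ∫ x, f x * g ‖x‖ ∂μ =
      (∫ v, f v ∂μ.toSphere) * ∫ r in Ioi 0, r ^ (n + (Module.finrank ℝ E - 1)) * g r := by
  have h_polar : ∀ x : ({0}ᶜ : Set E), f x * g ‖(x : E)‖ =
      f (homeomorphUnitSphereProd E x).1 * ((homeomorphUnitSphereProd E x).2 ^ n *
        g (homeomorphUnitSphereProd E x).2) := by
    rintro ⟨x, hx⟩
    have hx : 0 < ‖x‖ := norm_pos_iff.2 hx
    simp only [homeomorphUnitSphereProd, homeomorphSphereProd, Homeomorph.homeomorph_mk_coe,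
      Equiv.coe_fn_mk, one_smul, div_one]
    rw [← mul_assoc, mul_comm _ (‖x‖ ^ n), ← hf _ hx, smul_inv_smul₀ hx.ne']
  calc ∫ x, f x * g ‖x‖ ∂μ = ∫ x in ({0}ᶜ : Set E), f x * g ‖x‖ ∂μ := by
        rw [restrict_compl_singleton]
    _ = ∫ p : sphere (0 : E) 1 × Ioi (0 : ℝ), f p.1 * ((p.2 : ℝ) ^ n * g p.2)
          ∂(μ.toSphere.prod (Measure.volumeIoiPow (Module.finrank ℝ E - 1))) := by
        rw [← integral_subtype_comap (measurableSet_singleton 0).compl, funext h_polar,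
          (μ.measurePreserving_homeomorphUnitSphereProd).integral_comp
            (Homeomorph.measurableEmbedding _) (fun p => f p.1 * ((p.2 : ℝ) ^ n * g p.2))]
    _ = _ := by
      rw [integral_prod_mul (fun v : sphere (0 : E) 1 => f v)
        (fun r : Ioi (0 : ℝ) => (r : ℝ) ^ n * g r)]
      congr 1
      rw [Measure.volumeIoiPow, integral_withDensity_eq_integral_toReal_smul
          (by fun_prop) (Filter.Eventually.of_forall fun _ => ENNReal.ofReal_lt_top),
        integral_subtype_comap measurableSet_Ioi
          (fun r : ℝ => (ENNReal.ofReal (r ^ (Module.finrank ℝ E - 1))).toReal • (r ^ n * g r))]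
      refine setIntegral_congr_fun measurableSet_Ioi fun r hr => ?_
      rw [ENNReal.toReal_ofReal (pow_nonneg (le_of_lt hr) _), smul_eq_mul, pow_add]
      ring

theorem exists_linearIsometryEquiv_inner_eq_mul_apply {ι : Type*} [Fintype ι] [DecidableEq ι]
    (i : ι) (w : EuclideanSpace ℝ ι) :
    ∃ e : EuclideanSpace ℝ ι ≃ₗᵢ[ℝ] EuclideanSpace ℝ ι, ∀ x, ⟪w, x⟫_ℝ = ‖w‖ * e x i := by
  set e := Submodule.reflection (ℝ ∙ (w - EuclideanSpace.single i ‖w‖))ᗮ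
  have hw : e w = EuclideanSpace.single i ‖w‖ := Submodule.reflection_sub (by simp)
  refine ⟨e, fun x => ?_⟩
  rw [← e.inner_map_map, hw, EuclideanSpace.inner_single_left]
  simp

local notation "E3" => EuclideanSpace ℝ (Fin 3)
local notation "E2" => EuclideanSpace ℝ (Fin 2)

theorem integral_euclideanSpace_fin_two_fun_norm (g : ℝ → ℝ) :
    ∫ w : E2, g ‖w‖ = 2 * π * ∫ r in Ioi (0 : ℝ), r * g r := by
  rw [integral_fun_norm_addHaar, measureReal_def, EuclideanSpace.volume_ball_fin_two]
  simp [pi_nonneg]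
  ring

theorem integral_euclideanSpace_fin_three_mul (F : ℝ → ℝ) (G : E2 → ℝ) :
    ∫ y : E3, F (y 0) * G !₂[y 1, y 2] = (∫ t, F t) * ∫ w, G w := by
  rw [← (PiLp.volume_preserving_toLp (Fin 3)).integral_comp
      (MeasurableEquiv.toLp 2 _).measurableEmbedding,
    ← (volume_preserving_piFinSuccAbove (fun _ : Fin 3 => ℝ) 0).symm.integral_comp
      (MeasurableEquiv.measurableEmbedding _),
    ← (PiLp.volume_preserving_toLp (Fin 2)).integral_comp
      (MeasurableEquiv.toLp 2 _).measurableEmbedding,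
    Measure.volume_eq_prod, ← integral_prod_mul]
  congr 1
  ext ⟨t, w⟩
  congr 2
  ext i
  fin_cases i <;> rfl

theorem norm_sq_eq_apply_zero_sq_add (y : E3) :
    ‖y‖ ^ 2 = y 0 ^ 2 + ‖!₂[y 1, y 2]‖ ^ 2 := by
  simp [EuclideanSpace.norm_sq_eq, Fin.sum_univ_three, Fin.sum_univ_two]
  ring

theorem integral_mul_exp_neg_norm_sq_fin_three (F g : ℝ → ℝ) :
    ∫ y : E3, F (y 0) * g ‖!₂[y 1, y 2]‖ * exp (-‖y‖ ^ 2) =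
      (∫ t, F t * exp (-t ^ 2)) * (2 * π * ∫ r in Ioi (0 : ℝ), r * (g r * exp (-r ^ 2))) := by
  have h_split : ∀ y : E3, F (y 0) * g ‖!₂[y 1, y 2]‖ * exp (-‖y‖ ^ 2) =
      F (y 0) * exp (-y 0 ^ 2) * (g ‖!₂[y 1, y 2]‖ * exp (-‖!₂[y 1, y 2]‖ ^ 2)) := by
    intro y
    rw [norm_sq_eq_apply_zero_sq_add, neg_add, exp_add]
    ring
  rw [funext h_split, integral_euclideanSpace_fin_three_mul (fun t => F t * exp (-t ^ 2))
      (fun w => g ‖w‖ * exp (-‖w‖ ^ 2)),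
    integral_euclideanSpace_fin_two_fun_norm (fun r => g r * exp (-r ^ 2))]

theorem sphereMeasure_real_univ : sphereMeasure.real univ = 4 * π := by
  rw [measureReal_def, sphereMeasure, Measure.toSphere_apply_univ,
    EuclideanSpace.volume_ball_fin_three, finrank_euclideanSpace_fin, ENNReal.ofReal_one, one_pow,
    one_mul, ENNReal.toReal_mul, ENNReal.toReal_ofReal (by positivity)]
  norm_num
  ring

theorem integral_sphereMeasure_of_homogeneous (f : E3 → ℝ)
    (hf : ∀ r : ℝ, 0 < r → ∀ x, f (r • x) = r * f x) :
    ∫ v, f v ∂sphereMeasure = 2 * ∫ x : E3, f x * exp (-‖x‖ ^ 2) := by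
  have h := integral_mul_fun_norm_of_homogeneous volume (n := 1) (by simpa using hf)
    (fun r => exp (-r ^ 2))
  rw [finrank_euclideanSpace_fin, integral_Ioi_pow_mul_exp_neg_sq] at h
  rw [sphereMeasure, h]
  norm_num
  ring

theorem det3_eq_inner_cross (a b c : E3) : det3 a b c = ⟪WithLp.toLp 2 (a ⨯₃ b), c⟫_ℝ := by
  rw [det3, det_transpose]
  change det ![(a : Fin 3 → ℝ), b, c] = _
  rw [← triple_product_eq_det, triple_product_permutation, triple_product_permutation,
    EuclideanSpace.inner_eq_star_dotProduct]
  simp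

theorem norm_cross_sq (a b : E3) :
    ‖WithLp.toLp 2 (a ⨯₃ b)‖ ^ 2 = ‖a‖ ^ 2 * ‖b‖ ^ 2 - ⟪a, b⟫_ℝ ^ 2 := by
  simp only [← real_inner_self_eq_norm_sq, EuclideanSpace.inner_eq_star_dotProduct, star_trivial,
    cross_dot_cross]
  rw [dotProduct_comm (b : Fin 3 → ℝ) a]
  ring

theorem integral_sphereMeasure_abs_inner (w : E3) :
    ∫ v, |⟪w, (v : E3)⟫_ℝ| ∂sphereMeasure = 2 * π * ‖w‖ := by
  obtain ⟨e, he⟩ := exists_linearIsometryEquiv_inner_eq_mul_apply 0 w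
  have h_radial : ∫ r in Ioi (0 : ℝ), r * (1 * exp (-r ^ 2)) = 1 / 2 := by
    simpa using integral_Ioi_pow_mul_exp_neg_sq 1
  calc ∫ v, |⟪w, (v : E3)⟫_ℝ| ∂sphereMeasure
      = 2 * ∫ x : E3, |⟪w, x⟫_ℝ| * exp (-‖x‖ ^ 2) :=
        integral_sphereMeasure_of_homogeneous (fun x => |⟪w, x⟫_ℝ|) fun r hr x => by
          rw [inner_smul_right, abs_mul, abs_of_pos hr]
    _ = 2 * (‖w‖ * ∫ y : E3, |y 0| * 1 * exp (-‖y‖ ^ 2)) := by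
        congr 1
        rw [← integral_comp e (fun y : E3 => |y 0| * 1 * exp (-‖y‖ ^ 2)), ← integral_const_mul]
        congr with x
        simp [he, abs_mul, mul_assoc]
    _ = 2 * π * ‖w‖ := by
        rw [integral_mul_exp_neg_norm_sq_fin_three (fun t => |t|) (fun _ => 1),
          integral_abs_mul_exp_neg_sq, h_radial]
        ring

theorem integral_sphereMeasure_norm_cross (u : E3) :
    ∫ v, ‖WithLp.toLp 2 (u ⨯₃ (v : E3))‖ ∂sphereMeasure = π ^ 2 * ‖u‖ := by
  obtain ⟨e, he⟩ := exists_linearIsometryEquiv_inner_eq_mul_apply 0 u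
  have h_rot : ∀ x : E3, ‖WithLp.toLp 2 (u ⨯₃ x)‖ = ‖u‖ * ‖!₂[e x 1, e x 2]‖ := by
    intro x
    refine (sq_eq_sq₀ (norm_nonneg _) (by positivity)).1 ?_
    rw [norm_cross_sq, he, ← e.norm_map x, norm_sq_eq_apply_zero_sq_add (e x)]
    ring
  have h_gauss : ∫ t : ℝ, 1 * exp (-t ^ 2) = √π := by
    simpa using integral_gaussian 1
  have h_radial : ∫ r in Ioi (0 : ℝ), r * (r * exp (-r ^ 2)) = √π / 4 := by
    have := Gamma_nat_add_one_add_half 0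
    simp only [← mul_assoc, ← sq, integral_Ioi_pow_mul_exp_neg_sq]
    norm_num at this ⊢
    rw [this]
    ring
  calc ∫ v, ‖WithLp.toLp 2 (u ⨯₃ (v : E3))‖ ∂sphereMeasure
      = 2 * ∫ x : E3, ‖WithLp.toLp 2 (u ⨯₃ x)‖ * exp (-‖x‖ ^ 2) :=
        integral_sphereMeasure_of_homogeneous (fun x => ‖WithLp.toLp 2 (u ⨯₃ x)‖) fun r hr x => by
          simp [norm_smul, abs_of_pos hr]
    _ = 2 * (‖u‖ * ∫ y : E3, 1 * ‖!₂[y 1, y 2]‖ * exp (-‖y‖ ^ 2)) := by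
        congr 1
        rw [← integral_comp e (fun y : E3 => 1 * ‖!₂[y 1, y 2]‖ * exp (-‖y‖ ^ 2)),
          ← integral_const_mul]
        congr with x
        simp [h_rot, mul_assoc]
    _ = π ^ 2 * ‖u‖ := by
        rw [integral_mul_exp_neg_norm_sq_fin_three (fun _ => 1) (fun r => r), h_gauss,
          h_radial]
        rw [show π ^ 2 = √π ^ 2 * π by rw [sq_sqrt pi_nonneg]; ring]
        ring

/-- The integral over all triples `(v₁, v₂, v₃) ∈ S² × S² × S²` of
`|det(v₁, v₂, v₃)|`, with respect to the product of surface measures,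
equals `8π⁴`. -/
theorem integral_abs_det_sphere_triple :
    ∫ v₁ : sphere (0 : EuclideanSpace ℝ (Fin 3)) 1,
      ∫ v₂ : sphere (0 : EuclideanSpace ℝ (Fin 3)) 1,
        ∫ v₃ : sphere (0 : EuclideanSpace ℝ (Fin 3)) 1,
          |det3 (v₁ : EuclideanSpace ℝ (Fin 3)) v₂ v₃|
            ∂sphereMeasure ∂sphereMeasure ∂sphereMeasure
      = 8 * Real.pi ^ 4 := by
  simp_rw [det3_eq_inner_cross, integral_sphereMeasure_abs_inner, integral_const_mul,
    integral_sphereMeasure_norm_cross, norm_eq_of_mem_sphere, integral_const, smul_eq_mul,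
    sphereMeasure_real_univ]
  ring
end

section
/- If a compact convex body K ⊂ ℝ³ is such that for every affine plane E, the intersection K ∩ E (when nonempty with nonempty relative interior) is a Euclidean disc, then K is a Euclidean ball. -/
/-!
Let `a, b` be a diametral pair of `K`. A plane through `a` and `b` cuts `K` in a disc which
contains `a` and `b` and, lying in `K`, has diameter at most `|a - b|`; so `[a, b]` is a diameter
of that disc, i.e. the section is the disc of centre `midpoint a b` and radius `|a - b| / 2`.
Every point of space lies on some plane through `a` and `b`, hence `K` is the ball with
diameter `[a, b]`.
-/

open Metric

noncomputable section

abbrev E3 := EuclideanSpace ℝ (Fin 3)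

open scoped RealInnerProductSpace

section

variable {V : Type*} [NormedAddCommGroup V] [InnerProductSpace ℝ V]

theorem exists_ne_zero_forall_inner_eq_zero {k : ℕ} (u : Fin k → V)
    (hk : k < Module.finrank ℝ V) : ∃ n : V, n ≠ 0 ∧ ∀ i, ⟪n, u i⟫ = 0 := by
  have : FiniteDimensional ℝ V := Module.finite_of_finrank_pos ((Nat.zero_le k).trans_lt hk)
  obtain ⟨n, hn, hn0⟩ := Submodule.exists_mem_ne_zero_of_ne_bot
    (LinearMap.ker_ne_bot_of_finrank_lt (f := LinearMap.pi fun i => innerₛₗ ℝ (u i))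
      (by simpa using hk))
  exact ⟨n, hn0, fun i => (real_inner_comm _ _).trans (congrFun hn i)⟩

theorem convex_inner_eq (n : V) (d : ℝ) : Convex ℝ {x : V | ⟪n, x⟫ = d} :=
  convex_hyperplane (innerₛₗ ℝ n).isLinear d

theorem norm_sub_sq_eq_of_inner_eq {n y c x₀ : V} {t : ℝ} (hy : ⟪n, y⟫ = ⟪n, c⟫)
    (hx₀ : x₀ - c = t • n) : ‖y - x₀‖ ^ 2 = ‖y - c‖ ^ 2 + ‖x₀ - c‖ ^ 2 := by
  have horth : ⟪y - c, x₀ - c⟫ = 0 := by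
    rw [hx₀, real_inner_smul_right, real_inner_comm, inner_sub_right, hy, sub_self, mul_zero]
  have h := norm_sub_sq_eq_norm_sq_add_norm_sq_real horth
  rw [sub_sub_sub_cancel_right] at h
  simpa only [sq] using h

theorem exists_closedBall_inter_inner_eq {n : V} (hn : n ≠ 0) {d : ℝ} {x₀ : V} {ρ : ℝ}
    (hne : (closedBall x₀ ρ ∩ {x | ⟪n, x⟫ = d}).Nonempty) :
    ∃ c r, ⟪n, c⟫ = d ∧ 0 ≤ r ∧
      closedBall x₀ ρ ∩ {x | ⟪n, x⟫ = d} = closedBall c r ∩ {x | ⟪n, x⟫ = d} := by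
  set t := (⟪n, x₀⟫ - d) / ‖n‖ ^ 2
  set c := x₀ - t • n
  have hc : ⟪n, c⟫ = d := by
    have : ‖n‖ ^ 2 ≠ 0 := by positivity
    simp only [c, t, inner_sub_right, real_inner_smul_right, real_inner_self_eq_norm_sq]
    field_simp
    ring
  have hx₀c : x₀ - c = t • n := sub_sub_cancel x₀ (t • n)
  have pythagoras : ∀ y ∈ {x | ⟪n, x⟫ = d}, ‖y - x₀‖ ^ 2 = ‖y - c‖ ^ 2 + ‖x₀ - c‖ ^ 2 :=
    fun y hy => norm_sub_sq_eq_of_inner_eq (hy.trans hc.symm) hx₀c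
  obtain ⟨y, hyB, hyH⟩ := hne
  rw [mem_closedBall, dist_eq_norm] at hyB
  have hρ : 0 ≤ ρ := (norm_nonneg _).trans hyB
  have hs : 0 ≤ ρ ^ 2 - ‖x₀ - c‖ ^ 2 := by
    nlinarith [pythagoras y hyH, norm_nonneg (y - x₀), sq_nonneg ‖y - c‖]
  refine ⟨c, √(ρ ^ 2 - ‖x₀ - c‖ ^ 2), hc, Real.sqrt_nonneg _, ?_⟩
  ext z
  simp only [Set.mem_inter_iff, mem_closedBall, dist_eq_norm, and_congr_left_iff]
  intro hz
  rw [Real.le_sqrt (norm_nonneg _) hs, ← sq_le_sq₀ (norm_nonneg _) hρ, pythagoras z hz]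
  constructor <;> intro h <;> linarith

theorem exists_mem_closedBall_inter_inner_eq_dist_eq (hV : 1 < Module.finrank ℝ V)
    (n : V) {d : ℝ} {c : V} (hc : ⟪n, c⟫ = d) {r : ℝ} (hr : 0 ≤ r) :
    ∃ p ∈ closedBall c r ∩ {x | ⟪n, x⟫ = d}, ∃ q ∈ closedBall c r ∩ {x | ⟪n, x⟫ = d},
      dist p q = 2 * r := by
  obtain ⟨w, hw, hnw⟩ := exists_ne_zero_forall_inner_eq_zero ![n] hV
  set v := ‖w‖⁻¹ • w
  have hv : ‖v‖ = 1 := norm_smul_inv_norm hw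
  have hnv : ⟪n, v⟫ = 0 := by
    rw [real_inner_smul_right, real_inner_comm]
    exact mul_eq_zero_of_right _ (hnw 0)
  have mem : ∀ s : ℝ, |s| ≤ r → c + s • v ∈ closedBall c r ∩ {x | ⟪n, x⟫ = d} := by
    intro s hs
    refine ⟨?_, ?_⟩
    · rwa [mem_closedBall, dist_eq_norm, add_sub_cancel_left, norm_smul, hv, mul_one,
        Real.norm_eq_abs]
    · simp only [Set.mem_ofPred_eq, inner_add_right, real_inner_smul_right, hnv, hc, mul_zero,
        add_zero]
  refine ⟨c + r • v, mem r (abs_of_nonneg hr).le, c + (-r) • v,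
    mem (-r) (by rw [abs_neg, abs_of_nonneg hr]), ?_⟩
  rw [dist_eq_norm, add_sub_add_left_eq_sub, ← sub_smul, norm_smul, hv, mul_one,
    Real.norm_eq_abs, abs_of_nonneg (by linarith)]
  ring

theorem inter_inner_eq_closedBall_midpoint (hV : 1 < Module.finrank ℝ V) {K : Set V}
    {a b : V} (ha : a ∈ K) (hb : b ∈ K) (hdiam : ∀ x ∈ K, ∀ y ∈ K, dist x y ≤ dist a b)
    {n : V} (hn : n ≠ 0) {d : ℝ} (had : ⟪n, a⟫ = d) (hbd : ⟪n, b⟫ = d) {x₀ : V} {ρ : ℝ}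
    (hsec : K ∩ {x | ⟪n, x⟫ = d} = closedBall x₀ ρ ∩ {x | ⟪n, x⟫ = d}) :
    K ∩ {x | ⟪n, x⟫ = d} = closedBall (midpoint ℝ a b) (dist a b / 2) ∩ {x | ⟪n, x⟫ = d} := by
  have hne : (closedBall x₀ ρ ∩ {x | ⟪n, x⟫ = d}).Nonempty := hsec ▸ ⟨a, ha, had⟩
  obtain ⟨c, r, hc, hr, hcr⟩ := exists_closedBall_inter_inner_eq hn hne
  rw [hcr] at hsec
  rw [hsec]
  have hsub : closedBall c r ∩ {x | ⟪n, x⟫ = d} ⊆ K := hsec ▸ Set.inter_subset_left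
  have hball : K ∩ {x | ⟪n, x⟫ = d} ⊆ closedBall c r := hsec ▸ Set.inter_subset_left
  obtain ⟨p, hp, q, hq, hpq⟩ := exists_mem_closedBall_inter_inner_eq_dist_eq hV n hc hr
  have h2r : 2 * r ≤ dist a b := hpq ▸ hdiam p (hsub hp) q (hsub hq)
  have hac : dist a c ≤ r := hball ⟨ha, had⟩
  have hbc : dist c b ≤ r := mem_closedBall'.1 (hball ⟨hb, hbd⟩)
  have hab := dist_triangle a c b
  have hcm : c = midpoint ℝ a b := eq_midpoint_of_dist_eq_half (by linarith) (by linarith)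
  rw [← hcm, show r = dist a b / 2 by linarith]

theorem eq_closedBall_midpoint_of_forall_dist_le (hV : 2 < Module.finrank ℝ V) {K : Set V}
    (hsec : ∀ (n : V) (d : ℝ), n ≠ 0 → (K ∩ {x | ⟪n, x⟫ = d}).Nonempty →
      ∃ x₀ ρ, K ∩ {x | ⟪n, x⟫ = d} = closedBall x₀ ρ ∩ {x | ⟪n, x⟫ = d})
    {a b : V} (ha : a ∈ K) (hb : b ∈ K) (hdiam : ∀ x ∈ K, ∀ y ∈ K, dist x y ≤ dist a b) :
    K = closedBall (midpoint ℝ a b) (dist a b / 2) := by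
  ext x
  obtain ⟨n, hn, hnab⟩ := exists_ne_zero_forall_inner_eq_zero ![a - b, x - a] hV
  have hnb : ⟪n, b⟫ = ⟪n, a⟫ := (sub_eq_zero.1 (by rw [← inner_sub_right]; exact hnab 0)).symm
  have hnx : ⟪n, x⟫ = ⟪n, a⟫ := sub_eq_zero.1 (by rw [← inner_sub_right]; exact hnab 1)
  obtain ⟨x₀, ρ, hx₀⟩ := hsec n _ hn ⟨a, ha, rfl⟩
  have hKx := Set.ext_iff.1
    (inter_inner_eq_closedBall_midpoint (by omega) ha hb hdiam hn rfl hnb hx₀) x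
  simpa only [Set.mem_inter_iff, Set.mem_ofPred_eq, hnx, and_true] using hKx

end

theorem ball_of_all_sections_discs_general
    (K : Set E3) (hK : IsCompact K) (hKc : Convex ℝ K)
    (hdisc : ∀ (n : E3) (d : ℝ), n ≠ 0 →
      (intrinsicInterior ℝ (K ∩ {x : E3 | inner (𝕜 := ℝ) n x = d})).Nonempty →
      ∃ (x₀ : E3) (ρ : ℝ), 0 ≤ ρ ∧ inner (𝕜 := ℝ) n x₀ = d ∧
        K ∩ {x : E3 | inner (𝕜 := ℝ) n x = d} =
          closedBall x₀ ρ ∩ {x : E3 | inner (𝕜 := ℝ) n x = d}) :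
    ∃ (x₀ : E3) (ρ : ℝ), K = closedBall x₀ ρ := by
  rcases K.eq_empty_or_nonempty with rfl | hne
  · exact ⟨0, -1, (closedBall_eq_empty.2 (by norm_num)).symm⟩
  obtain ⟨⟨a, b⟩, ⟨ha, hb⟩, hmax⟩ :=
    (hK.prod hK).exists_isMaxOn (hne.prod hne) (f := fun p : E3 × E3 => dist p.1 p.2)
      continuous_dist.continuousOn
  have hsec : ∀ (n : E3) (d : ℝ), n ≠ 0 → (K ∩ {x | ⟪n, x⟫ = d}).Nonempty →
      ∃ x₀ ρ, K ∩ {x | ⟪n, x⟫ = d} = closedBall x₀ ρ ∩ {x | ⟪n, x⟫ = d} := by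
    intro n d hn hne
    obtain ⟨x₀, ρ, -, -, h⟩ :=
      hdisc n d hn (hne.intrinsicInterior (hKc.inter (convex_inner_eq n d)))
    exact ⟨x₀, ρ, h⟩
  have hdim : 2 < Module.finrank ℝ E3 := by rw [finrank_euclideanSpace_fin]; norm_num
  exact ⟨midpoint ℝ a b, dist a b / 2, eq_closedBall_midpoint_of_forall_dist_le hdim hsec ha hb
    fun x hx y hy => isMaxOn_iff.1 hmax (x, y) (Set.mk_mem_prod hx hy)⟩

/-- If every affine plane section of a compact convex body `K ⊂ ℝ³` which has nonempty
relative interior is a Euclidean disc, then `K` is a Euclidean ball. -/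
theorem ball_of_all_sections_discs
    (K : Set E3) (hK : IsCompact K) (hKc : Convex ℝ K) (hKint : (interior K).Nonempty)
    (hdisc : ∀ (n : E3) (d : ℝ), n ≠ 0 →
      (intrinsicInterior ℝ (K ∩ {x : E3 | inner (𝕜 := ℝ) n x = d})).Nonempty →
      ∃ (x₀ : E3) (ρ : ℝ), 0 ≤ ρ ∧ inner (𝕜 := ℝ) n x₀ = d ∧
        K ∩ {x : E3 | inner (𝕜 := ℝ) n x = d} =
          closedBall x₀ ρ ∩ {x : E3 | inner (𝕜 := ℝ) n x = d}) :
    ∃ (x₀ : E3) (ρ : ℝ), K = closedBall x₀ ρ :=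
  ball_of_all_sections_discs_general K hK hKc hdisc

end
end
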